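/- arXiv:2109.07030 — 4 statements merged into one kernel-verified Lean document; each statement's English description precedes it below -/
import Mathlib

section
/- Let U, Z, X be random variables and A a random variable, and suppose Z is conditionally independent of (W, Y) given (A, U, X). If a function h satisfies E[Y | A=a, Z=z, X=x] = E[h(W, a, X) | A=a, Z=z, X=x] for all a, z, x, and the completeness condition holds that for every square-integrable function ν, E[ν(U) | A=a, Z, X=x] = 0 almost surely implies ν(U) = 0 almost surely, then E[Y | A=a, U=u, X=x] = E[h(W, a, X) | A=a, U=u, X=x] for all a, u, x. -/
/-!
Fix `a, x` and put `g = Y - h(W, a, x)` and `ν u = E[g | A = a, U = u, X = x]`. Conditional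
independence of `Z` and `(W, Y)` given `(A, U, X)` gives the tower identity
`E[ν(U) | A = a, Z = z, X = x] = E[g | A = a, Z = z, X = x]`, which vanishes by the bridge
equation. Completeness then forces `ν(U) = 0` almost surely on `{A = a, X = x}`, and every
latent value `u` of positive mass is attained there, so `ν u = 0`.
-/

open Finset MeasureTheory

open scoped Classical

/-- Probability of an event on a finite outcome space with mass function `p`. -/
noncomputable def pr {Ω : Type*} [Fintype Ω] (p : Ω → ℝ) (E : Ω → Prop) : ℝ :=
  ∑ ω, if E ω then p ω else 0

/-- Conditional expectation `E[f | E]` on a finite outcome space. -/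
noncomputable def cexp {Ω : Type*} [Fintype Ω] (p : Ω → ℝ) (f : Ω → ℝ) (E : Ω → Prop) : ℝ :=
  (∑ ω, if E ω then p ω * f ω else 0) / pr p E

/-- Conditional probability `P(E | F)` on a finite outcome space. -/
noncomputable def cprob {Ω : Type*} [Fintype Ω] (p : Ω → ℝ) (E F : Ω → Prop) : ℝ :=
  pr p (fun ω => E ω ∧ F ω) / pr p F

/-- Expectation on a finite outcome space. -/
noncomputable def pexp {Ω : Type*} [Fintype Ω] (p : Ω → ℝ) (f : Ω → ℝ) : ℝ :=
  ∑ ω, p ω * f ω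

/-- `S` is conditionally independent of `T` given `C`:  for every pair of (bounded) test
functions `F, G` and every value `c` of `C` with positive probability, the conditional
expectation of the product factorizes. -/
def CondIndep {Ω α β γ : Type*} [Fintype Ω] (p : Ω → ℝ)
    (S : Ω → α) (T : Ω → β) (C : Ω → γ) : Prop :=
  ∀ (F : α → ℝ) (G : β → ℝ) (c : γ), pr p (fun ω => C ω = c) ≠ 0 →
    cexp p (fun ω => F (S ω) * G (T ω)) (fun ω => C ω = c) =
      cexp p (fun ω => F (S ω)) (fun ω => C ω = c) *
        cexp p (fun ω => G (T ω)) (fun ω => C ω = c)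

section FiniteConditioning

variable {Ω : Type*} [Fintype Ω] {p : Ω → ℝ}

lemma cexp_congr {f g : Ω → ℝ} {E : Ω → Prop} (hfg : ∀ ω, E ω → f ω = g ω) :
    cexp p f E = cexp p g E := by
  unfold cexp
  congr 1
  refine sum_congr rfl fun ω _ => ?_
  split_ifs with hE
  · rw [hfg ω hE]
  · rfl

lemma cexp_sub (f g : Ω → ℝ) (E : Ω → Prop) :
    cexp p (fun ω => f ω - g ω) E = cexp p f E - cexp p g E := by
  simp only [cexp, ← sub_div, ← sum_sub_distrib]
  congr 1
  refine sum_congr rfl fun ω _ => ?_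
  split_ifs <;> ring

lemma exists_ne_zero_of_pr_ne_zero {E : Ω → Prop} (hE : pr p E ≠ 0) :
    ∃ ω, E ω ∧ p ω ≠ 0 := by
  by_contra! hnull
  exact hE (sum_eq_zero fun ω _ => by split_ifs with hω; exacts [hnull ω hω, rfl])

lemma eq_zero_of_pr_eq_zero (hp : ∀ ω, 0 ≤ p ω) {E : Ω → Prop} (hE : pr p E = 0)
    {ω : Ω} (hω : E ω) : p ω = 0 := by
  have := (sum_eq_zero_iff_of_nonneg fun i _ => by split_ifs; exacts [hp i, le_rfl]).mp hE ω
    (mem_univ ω)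
  simpa [hω] using this

lemma cexp_mul_pr (hp : ∀ ω, 0 ≤ p ω) (f : Ω → ℝ) (E : Ω → Prop) :
    cexp p f E * pr p E = ∑ ω, if E ω then p ω * f ω else 0 := by
  by_cases hE : pr p E = 0
  · rw [hE, mul_zero]
    refine (sum_eq_zero fun ω _ => ?_).symm
    split_ifs with hω
    · rw [eq_zero_of_pr_eq_zero hp hE hω, zero_mul]
    · rfl
  · exact div_mul_cancel₀ _ hE

lemma sum_comp_eq_sum_image_sum_ite {γ : Type*} (C : Ω → γ) (φ : Ω → γ → ℝ) :
    ∑ ω, φ ω (C ω) = ∑ c ∈ univ.image C, ∑ ω, if C ω = c then φ ω c else 0 := by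
  rw [← sum_fiberwise_of_maps_to (g := C) (t := univ.image C)
    (fun ω _ => mem_image_of_mem C (mem_univ ω))]
  refine sum_congr rfl fun c _ => ?_
  rw [sum_filter]
  refine sum_congr rfl fun ω _ => ?_
  split_ifs with hω
  · rw [hω]
  · rfl

end FiniteConditioning

namespace CondIndep

variable {Ω α β γ : Type*} [Fintype Ω] {p : Ω → ℝ} {S : Ω → α} {T : Ω → β} {C : Ω → γ}

lemma sum_mul_eq (hp : ∀ ω, 0 ≤ p ω) (hCI : CondIndep p S T C) (F : α → ℝ) (G : β → ℝ)
    (c : γ) :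
    (∑ ω, if C ω = c then p ω * (F (S ω) * G (T ω)) else 0) =
      (∑ ω, if C ω = c then p ω * F (S ω) else 0) *
        cexp p (fun ω => G (T ω)) (fun ω => C ω = c) := by
  rw [← cexp_mul_pr hp, ← cexp_mul_pr hp]
  by_cases hc : pr p (fun ω => C ω = c) = 0
  · simp [hc]
  · rw [hCI F G c hc]
    ring

/-- The tower property `E[G(T) | B] = E[E[G(T) | C] | B]` for events `B ∈ σ(S, C)`. -/
lemma cexp_eq_cexp_cexp (hp : ∀ ω, 0 ≤ p ω) (hCI : CondIndep p S T C) (G : β → ℝ)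
    (P : α → γ → Prop) :
    cexp p (fun ω => G (T ω)) (fun ω => P (S ω) (C ω)) =
      cexp p (fun ω => cexp p (fun ω' => G (T ω')) (fun ω' => C ω' = C ω))
        (fun ω => P (S ω) (C ω)) := by
  refine congrArg (· / pr p _) ?_
  set m : γ → ℝ := fun c => cexp p (fun ω => G (T ω)) (fun ω => C ω = c)
  let F : γ → α → ℝ := fun c s => if P s c then 1 else 0
  calc (∑ ω, if P (S ω) (C ω) then p ω * G (T ω) else 0)
      = ∑ c ∈ univ.image C, ∑ ω, if C ω = c then p ω * (F c (S ω) * G (T ω)) else 0 := by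
        rw [← sum_comp_eq_sum_image_sum_ite C fun ω c => p ω * (F c (S ω) * G (T ω))]
        simp [F]
    _ = ∑ c ∈ univ.image C, (∑ ω, if C ω = c then p ω * F c (S ω) else 0) * m c := by
        simp only [hCI.sum_mul_eq hp, m]
    _ = ∑ ω, if P (S ω) (C ω) then p ω * m (C ω) else 0 := by
        rw [sum_comp_eq_sum_image_sum_ite C fun ω c => if P (S ω) c then p ω * m c else 0]
        refine sum_congr rfl fun c _ => ?_
        rw [sum_mul]
        refine sum_congr rfl fun ω _ => ?_
        split_ifs <;> simp_all [F]

end CondIndep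

theorem stmt_0_general {Ω 𝒰 𝒵 𝒳 𝒲 𝒜 : Type*} [Fintype Ω]
    (p : Ω → ℝ) (hp : ∀ ω, 0 ≤ p ω)
    (U : Ω → 𝒰) (Z : Ω → 𝒵) (X : Ω → 𝒳) (W : Ω → 𝒲) (A : Ω → 𝒜) (Y : Ω → ℝ)
    (h : 𝒲 → 𝒜 → 𝒳 → ℝ)
    (hCI : CondIndep p Z (fun ω => (W ω, Y ω)) (fun ω => (A ω, U ω, X ω)))
    (hbridge : ∀ a z x, pr p (fun ω => A ω = a ∧ Z ω = z ∧ X ω = x) ≠ 0 →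
      cexp p Y (fun ω => A ω = a ∧ Z ω = z ∧ X ω = x) =
        cexp p (fun ω => h (W ω) a (X ω)) (fun ω => A ω = a ∧ Z ω = z ∧ X ω = x))
    (hcomplete : ∀ (ν : 𝒰 → ℝ) (a : 𝒜) (x : 𝒳),
      (∀ z, pr p (fun ω => A ω = a ∧ Z ω = z ∧ X ω = x) ≠ 0 →
        cexp p (fun ω => ν (U ω)) (fun ω => A ω = a ∧ Z ω = z ∧ X ω = x) = 0) →
      ∀ ω, p ω ≠ 0 → A ω = a → X ω = x → ν (U ω) = 0) :
    ∀ a u x, pr p (fun ω => A ω = a ∧ U ω = u ∧ X ω = x) ≠ 0 →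
      cexp p Y (fun ω => A ω = a ∧ U ω = u ∧ X ω = x) =
        cexp p (fun ω => h (W ω) a (X ω)) (fun ω => A ω = a ∧ U ω = u ∧ X ω = x) := by
  intro a u x hu
  set g : Ω → ℝ := fun ω => Y ω - h (W ω) a x
  have hg : ∀ E : Ω → Prop, (∀ ω, E ω → X ω = x) →
      cexp p g E = cexp p Y E - cexp p (fun ω => h (W ω) a (X ω)) E := fun E hE => by
    rw [cexp_sub, cexp_congr (f := fun ω => h (W ω) a (X ω)) fun ω hω => by rw [hE ω hω]]
  set ν : 𝒰 → ℝ := fun u => cexp p g (fun ω => A ω = a ∧ U ω = u ∧ X ω = x)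
  have hν : ∀ z, pr p (fun ω => A ω = a ∧ Z ω = z ∧ X ω = x) ≠ 0 →
      cexp p (fun ω => ν (U ω)) (fun ω => A ω = a ∧ Z ω = z ∧ X ω = x) = 0 := by
    intro z hz
    calc _ = cexp p (fun ω => cexp p g (fun ω' => (A ω', U ω', X ω') = (A ω, U ω, X ω)))
          (fun ω => A ω = a ∧ Z ω = z ∧ X ω = x) :=
          cexp_congr fun ω hω => by simp only [ν, hω.1, hω.2.2, Prod.mk.injEq]
      _ = cexp p g (fun ω => A ω = a ∧ Z ω = z ∧ X ω = x) :=
          (hCI.cexp_eq_cexp_cexp hp (fun wy => wy.2 - h wy.1 a x)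
            fun z' c => c.1 = a ∧ z' = z ∧ c.2.2 = x).symm
      _ = 0 := by rw [hg _ fun ω hω => hω.2.2, hbridge a z x hz, sub_self]
  obtain ⟨ω, hω, hpω⟩ := exists_ne_zero_of_pr_ne_zero hu
  have hνu : ν u = 0 := hω.2.1 ▸ hcomplete ν a x hν ω hpω hω.1 hω.2.2
  exact sub_eq_zero.mp ((hg _ fun ω hω => hω.2.2).symm.trans hνu)

/-- point-treatment proximal identification via an outcome confounding
bridge function: the observed-level bridge equation (conditioning on the treatment-inducing
proxy `Z`) lifts to the latent confounder `U` under completeness, given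
`Z ⟂ (W, Y) | (A, U, X)`. -/
theorem stmt_0 {Ω 𝒰 𝒵 𝒳 𝒲 𝒜 : Type*} [Fintype Ω]
    (p : Ω → ℝ) (hp : ∀ ω, 0 ≤ p ω) (hsum : ∑ ω, p ω = 1)
    (U : Ω → 𝒰) (Z : Ω → 𝒵) (X : Ω → 𝒳) (W : Ω → 𝒲) (A : Ω → 𝒜) (Y : Ω → ℝ)
    (h : 𝒲 → 𝒜 → 𝒳 → ℝ)
    (hCI : CondIndep p Z (fun ω => (W ω, Y ω)) (fun ω => (A ω, U ω, X ω)))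
    (hbridge : ∀ a z x, pr p (fun ω => A ω = a ∧ Z ω = z ∧ X ω = x) ≠ 0 →
      cexp p Y (fun ω => A ω = a ∧ Z ω = z ∧ X ω = x) =
        cexp p (fun ω => h (W ω) a (X ω)) (fun ω => A ω = a ∧ Z ω = z ∧ X ω = x))
    (hcomplete : ∀ (ν : 𝒰 → ℝ) (a : 𝒜) (x : 𝒳),
      (∀ z, pr p (fun ω => A ω = a ∧ Z ω = z ∧ X ω = x) ≠ 0 →
        cexp p (fun ω => ν (U ω)) (fun ω => A ω = a ∧ Z ω = z ∧ X ω = x) = 0) →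
      ∀ ω, p ω ≠ 0 → A ω = a → X ω = x → ν (U ω) = 0) :
    ∀ a u x, pr p (fun ω => A ω = a ∧ U ω = u ∧ X ω = x) ≠ 0 →
      cexp p Y (fun ω => A ω = a ∧ U ω = u ∧ X ω = x) =
        cexp p (fun ω => h (W ω) a (X ω)) (fun ω => A ω = a ∧ U ω = u ∧ X ω = x) :=
  stmt_0_general p hp U Z X W A Y h hCI hbridge hcomplete
end

section
/- Suppose W is conditionally independent of (Z, A) given (U, X), A is binary, and a function q satisfies 1/P(A=a | W=w, X=x) = E[q(Z, a, X) | A=a, W=w, X=x] for all a, w, x. If the completeness condition holds that for every square-integrable ν, E[ν(U) | A=a, W, X=x] = 0 a.s. implies ν(U) = 0 a.s., then 1/P(A=a | U=u, X=x) = E[q(Z, a, X) | A=a, U=u, X=x] for all a, u, x. -/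
open Finset MeasureTheory

open scoped Classical

/-!
By `W ⟂ (Z, A) | (U, X)`, on every latent cell `{U = v, X = x}` the residual
`r v = E[q | A = a, U = v, X = x] - 1 / P(A = a | U = v, X = x)` of the latent bridge
equation satisfies
`r v * P(A = a, W = w, U = v, X = x) = E[q; A = a, W = w, U = v, X = x] - P(W = w, U = v, X = x)`.
Summing over the cells, the observed bridge equation makes `E[r(U) | A = a, W = w, X = x]`
vanish for every `w`, and completeness forces `r(U) = 0`.
-/

section FiniteProbability

variable {Ω : Type*} [Fintype Ω] {p : Ω → ℝ}

/-- The partial expectation `E[f; E] = E[f 1_E]`. -/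
noncomputable def pexpOn (p : Ω → ℝ) (f : Ω → ℝ) (E : Ω → Prop) : ℝ :=
  ∑ ω, if E ω then p ω * f ω else 0

lemma cexp_eq_pexpOn_div (f : Ω → ℝ) (E : Ω → Prop) : cexp p f E = pexpOn p f E / pr p E :=
  rfl

lemma pexpOn_one (E : Ω → Prop) : pexpOn p (fun _ => 1) E = pr p E := by
  simp [pexpOn, pr]

lemma pexpOn_ite (f : Ω → ℝ) (E' E : Ω → Prop) :
    pexpOn p (fun ω => if E' ω then f ω else 0) E = pexpOn p f (fun ω => E' ω ∧ E ω) := by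
  refine sum_congr rfl fun ω _ => ?_
  by_cases h : E' ω <;> simp [h]

lemma pexpOn_congr_fun {f g : Ω → ℝ} {E : Ω → Prop} (hfg : ∀ ω, E ω → f ω = g ω) :
    pexpOn p f E = pexpOn p g E := by
  refine sum_congr rfl fun ω _ => ?_
  split_ifs with h
  · rw [hfg ω h]
  · rfl

lemma pexpOn_eq_mul_pr {f : Ω → ℝ} {E : Ω → Prop} {c : ℝ} (hf : ∀ ω, E ω → f ω = c) :
    pexpOn p f E = c * pr p E := by
  rw [pexpOn_congr_fun hf, pr, mul_sum]
  refine sum_congr rfl fun ω _ => ?_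
  split_ifs <;> ring

lemma pexpOn_eq_zero_of_pr_eq_zero (hp : ∀ ω, 0 ≤ p ω) {E E' : Ω → Prop} (h0 : pr p E = 0)
    (hE : ∀ ω, E' ω → E ω) (f : Ω → ℝ) : pexpOn p f E' = 0 := by
  have hterm := (sum_eq_zero_iff_of_nonneg fun ω _ => by split_ifs <;> simp [hp ω]).mp h0
  refine sum_eq_zero fun ω _ => ?_
  split_ifs with h
  · have hpω := hterm ω (mem_univ ω)
    rw [if_pos (hE ω h)] at hpω
    rw [hpω, zero_mul]
  · rfl

lemma exists_of_pr_ne_zero {E : Ω → Prop} (h : pr p E ≠ 0) : ∃ ω, E ω ∧ p ω ≠ 0 := by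
  obtain ⟨ω, -, hω⟩ := exists_ne_zero_of_sum_ne_zero h
  by_cases hE : E ω
  · exact ⟨ω, hE, by simpa [hE] using hω⟩
  · simp [hE] at hω

lemma sum_pexpOn_fiber {𝒰 : Type*} (U : Ω → 𝒰) (f : Ω → ℝ) (E : Ω → Prop) :
    ∑ v ∈ univ.image U, pexpOn p f (fun ω => U ω = v ∧ E ω) = pexpOn p f E := by
  simp only [pexpOn]
  rw [sum_comm]
  refine sum_congr rfl fun ω _ => ?_
  by_cases hE : E ω <;> simp [hE]

lemma pr_ne_zero_of_cprob_pos {E F : Ω → Prop} (h : 0 < cprob p E F) :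
    pr p (fun ω => E ω ∧ F ω) ≠ 0 := by
  intro h0
  simp [cprob, h0] at h

lemma pexpOn_eq_pr_of_inv_cprob_eq_cexp {E F : Ω → Prop} {f : Ω → ℝ}
    (hEF : pr p (fun ω => E ω ∧ F ω) ≠ 0)
    (h : (cprob p E F)⁻¹ = cexp p f (fun ω => E ω ∧ F ω)) :
    pexpOn p f (fun ω => E ω ∧ F ω) = pr p F := by
  rw [cprob, inv_div, cexp_eq_pexpOn_div] at h
  exact ((div_left_inj' hEF).mp h).symm

end FiniteProbability

namespace CondIndep

variable {Ω α β γ : Type*} [Fintype Ω] {p : Ω → ℝ} {S : Ω → α} {T : Ω → β} {C : Ω → γ}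

lemma pexpOn_mul_pr (h : CondIndep p S T C) {c : γ} (hc : pr p (fun ω => C ω = c) ≠ 0)
    (s : α) (G : β → ℝ) :
    pexpOn p (fun ω => G (T ω)) (fun ω => S ω = s ∧ C ω = c) * pr p (fun ω => C ω = c) =
      pr p (fun ω => S ω = s ∧ C ω = c) * pexpOn p (fun ω => G (T ω)) (fun ω => C ω = c) := by
  have hfac := h (fun a => if a = s then 1 else 0) G c hc
  simp only [cexp_eq_pexpOn_div, ite_mul, one_mul, zero_mul, pexpOn_ite, pexpOn_one] at hfac
  field_simp at hfac
  linear_combination hfac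

lemma bridge_residual_mul_pr (h : CondIndep p S T C) (hp : ∀ ω, 0 ≤ p ω) (t : β → Prop)
    (g : β → ℝ) (s : α) (c : γ)
    (hpos : pr p (fun ω => C ω = c) ≠ 0 → pr p (fun ω => t (T ω) ∧ C ω = c) ≠ 0) :
    (cexp p (fun ω => g (T ω)) (fun ω => t (T ω) ∧ C ω = c) -
        (cprob p (fun ω => t (T ω)) (fun ω => C ω = c))⁻¹) *
        pr p (fun ω => t (T ω) ∧ S ω = s ∧ C ω = c) =
      pexpOn p (fun ω => g (T ω)) (fun ω => t (T ω) ∧ S ω = s ∧ C ω = c) -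
        pr p (fun ω => S ω = s ∧ C ω = c) := by
  by_cases hc : pr p (fun ω => C ω = c) = 0
  · simp only [← pexpOn_one]
    rw [pexpOn_eq_zero_of_pr_eq_zero hp hc (fun ω h => h.2.2),
      pexpOn_eq_zero_of_pr_eq_zero hp hc (fun ω h => h.2.2),
      pexpOn_eq_zero_of_pr_eq_zero hp hc (fun ω h => h.2)]
    ring
  have hd := hpos hc
  have hN := h.pexpOn_mul_pr hc s (fun b => if t b then g b else 0)
  have hD := h.pexpOn_mul_pr hc s (fun b => if t b then 1 else 0)
  simp only [pexpOn_ite, pexpOn_one] at hN hD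
  rw [cexp_eq_pexpOn_div, cprob, inv_div, ← sub_div, div_mul_eq_mul_div, div_eq_iff hd]
  refine mul_right_cancel₀ hc ?_
  linear_combination (pexpOn p (fun ω => g (T ω)) (fun ω => t (T ω) ∧ C ω = c) -
    pr p (fun ω => C ω = c)) * hD - pr p (fun ω => t (T ω) ∧ C ω = c) * hN

end CondIndep

section LatentBridge

variable {Ω 𝒰 𝒵 𝒳 𝒲 𝒜 : Type*} [Fintype Ω] {p : Ω → ℝ}
  {U : Ω → 𝒰} {Z : Ω → 𝒵} {X : Ω → 𝒳} {W : Ω → 𝒲} {A : Ω → 𝒜}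

noncomputable def latentBridgeResidual (p : Ω → ℝ) (U : Ω → 𝒰) (Z : Ω → 𝒵) (X : Ω → 𝒳)
    (A : Ω → 𝒜) (g : 𝒵 → ℝ) (a : 𝒜) (x : 𝒳) (v : 𝒰) : ℝ :=
  cexp p (fun ω => g (Z ω)) (fun ω => A ω = a ∧ U ω = v ∧ X ω = x) -
    (cprob p (fun ω => A ω = a) (fun ω => U ω = v ∧ X ω = x))⁻¹

lemma latentBridgeResidual_mul_pr (hp : ∀ ω, 0 ≤ p ω)
    (hCI : CondIndep p W (fun ω => (Z ω, A ω)) (fun ω => (U ω, X ω))) {a : 𝒜} {x : 𝒳}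
    (hpos : ∀ v, pr p (fun ω => U ω = v ∧ X ω = x) ≠ 0 →
      pr p (fun ω => A ω = a ∧ U ω = v ∧ X ω = x) ≠ 0)
    (g : 𝒵 → ℝ) (w : 𝒲) (v : 𝒰) :
    latentBridgeResidual p U Z X A g a x v *
        pr p (fun ω => U ω = v ∧ A ω = a ∧ W ω = w ∧ X ω = x) =
      pexpOn p (fun ω => g (Z ω)) (fun ω => U ω = v ∧ A ω = a ∧ W ω = w ∧ X ω = x) -
        pr p (fun ω => U ω = v ∧ W ω = w ∧ X ω = x) := by
  have := hCI.bridge_residual_mul_pr hp (fun za => za.2 = a) (fun za => g za.1) w (v, x)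
    (by simpa only [Prod.mk.injEq] using hpos v)
  simpa only [latentBridgeResidual, Prod.mk.injEq, and_left_comm] using this

lemma pexpOn_latentBridgeResidual (hp : ∀ ω, 0 ≤ p ω)
    (hCI : CondIndep p W (fun ω => (Z ω, A ω)) (fun ω => (U ω, X ω))) {a : 𝒜} {x : 𝒳}
    (hpos : ∀ v, pr p (fun ω => U ω = v ∧ X ω = x) ≠ 0 →
      pr p (fun ω => A ω = a ∧ U ω = v ∧ X ω = x) ≠ 0)
    (g : 𝒵 → ℝ) (w : 𝒲) :
    pexpOn p (fun ω => latentBridgeResidual p U Z X A g a x (U ω))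
        (fun ω => A ω = a ∧ W ω = w ∧ X ω = x) =
      pexpOn p (fun ω => g (Z ω)) (fun ω => A ω = a ∧ W ω = w ∧ X ω = x) -
        pr p (fun ω => W ω = w ∧ X ω = x) := by
  rw [← sum_pexpOn_fiber U _ (fun ω => A ω = a ∧ W ω = w ∧ X ω = x),
    ← sum_pexpOn_fiber U _ (fun ω => A ω = a ∧ W ω = w ∧ X ω = x), ← pexpOn_one,
    ← sum_pexpOn_fiber U _ (fun ω => W ω = w ∧ X ω = x), ← sum_sub_distrib]
  refine sum_congr rfl fun v _ => ?_
  rw [pexpOn_eq_mul_pr fun ω h => by rw [h.1], pexpOn_one]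
  exact latentBridgeResidual_mul_pr hp hCI hpos g w v

end LatentBridge

theorem stmt_1_general {Ω 𝒰 𝒵 𝒳 𝒲 : Type*} [Fintype Ω]
    (p : Ω → ℝ) (hp : ∀ ω, 0 ≤ p ω)
    (U : Ω → 𝒰) (Z : Ω → 𝒵) (X : Ω → 𝒳) (W : Ω → 𝒲) (A : Ω → Bool)
    (q : 𝒵 → Bool → 𝒳 → ℝ)
    (hCI : CondIndep p W (fun ω => (Z ω, A ω)) (fun ω => (U ω, X ω)))
    (hpos : ∀ (a : Bool) u x, pr p (fun ω => U ω = u ∧ X ω = x) ≠ 0 →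
      0 < cprob p (fun ω => A ω = a) (fun ω => U ω = u ∧ X ω = x))
    (hbridge : ∀ (a : Bool) w x, pr p (fun ω => A ω = a ∧ W ω = w ∧ X ω = x) ≠ 0 →
      (cprob p (fun ω => A ω = a) (fun ω => W ω = w ∧ X ω = x))⁻¹ =
        cexp p (fun ω => q (Z ω) a (X ω)) (fun ω => A ω = a ∧ W ω = w ∧ X ω = x))
    (hcomplete : ∀ (ν : 𝒰 → ℝ) (a : Bool) (x : 𝒳),
      (∀ w, pr p (fun ω => A ω = a ∧ W ω = w ∧ X ω = x) ≠ 0 →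
        cexp p (fun ω => ν (U ω)) (fun ω => A ω = a ∧ W ω = w ∧ X ω = x) = 0) →
      ∀ ω, p ω ≠ 0 → A ω = a → X ω = x → ν (U ω) = 0) :
    ∀ (a : Bool) u x, pr p (fun ω => A ω = a ∧ U ω = u ∧ X ω = x) ≠ 0 →
      (cprob p (fun ω => A ω = a) (fun ω => U ω = u ∧ X ω = x))⁻¹ =
        cexp p (fun ω => q (Z ω) a (X ω)) (fun ω => A ω = a ∧ U ω = u ∧ X ω = x) := by
  intro a u x hu
  have hposA : ∀ v, pr p (fun ω => U ω = v ∧ X ω = x) ≠ 0 →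
      pr p (fun ω => A ω = a ∧ U ω = v ∧ X ω = x) ≠ 0 :=
    fun v hv => pr_ne_zero_of_cprob_pos (hpos a v x hv)
  have hqx : ∀ E : Ω → Prop, (∀ ω, E ω → X ω = x) →
      pexpOn p (fun ω => q (Z ω) a (X ω)) E = pexpOn p (fun ω => q (Z ω) a x) E :=
    fun E hE => pexpOn_congr_fun fun ω h => by rw [hE ω h]
  have hproxy : ∀ w, pr p (fun ω => A ω = a ∧ W ω = w ∧ X ω = x) ≠ 0 →
      cexp p (fun ω => latentBridgeResidual p U Z X A (fun z => q z a x) a x (U ω))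
        (fun ω => A ω = a ∧ W ω = w ∧ X ω = x) = 0 := by
    intro w hw
    have hobs := pexpOn_eq_pr_of_inv_cprob_eq_cexp hw (hbridge a w x hw)
    rw [hqx _ fun ω h => h.2.2] at hobs
    rw [cexp_eq_pexpOn_div, pexpOn_latentBridgeResidual hp hCI hposA, hobs, sub_self, zero_div]
  obtain ⟨ω, ⟨rfl, rfl, rfl⟩, hω⟩ := exists_of_pr_ne_zero hu
  have hres := hcomplete _ (A ω) (X ω) hproxy ω hω rfl rfl
  rw [latentBridgeResidual, sub_eq_zero] at hres
  rw [← hres, cexp_eq_pexpOn_div, cexp_eq_pexpOn_div, hqx _ fun ω h => h.2.2]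

/-- point-treatment identification of the treatment confounding bridge:
the observed-level bridge equation (conditioning on the outcome-inducing proxy `W`)
lifts to the latent confounder `U` under completeness, given `W ⟂ (Z, A) | (U, X)`
and positivity. -/
theorem stmt_1 {Ω 𝒰 𝒵 𝒳 𝒲 : Type*} [Fintype Ω]
    (p : Ω → ℝ) (hp : ∀ ω, 0 ≤ p ω) (hsum : ∑ ω, p ω = 1)
    (U : Ω → 𝒰) (Z : Ω → 𝒵) (X : Ω → 𝒳) (W : Ω → 𝒲) (A : Ω → Bool)
    (q : 𝒵 → Bool → 𝒳 → ℝ)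
    (hCI : CondIndep p W (fun ω => (Z ω, A ω)) (fun ω => (U ω, X ω)))
    (hpos : ∀ (a : Bool) u x, pr p (fun ω => U ω = u ∧ X ω = x) ≠ 0 →
      0 < cprob p (fun ω => A ω = a) (fun ω => U ω = u ∧ X ω = x))
    (hbridge : ∀ (a : Bool) w x, pr p (fun ω => A ω = a ∧ W ω = w ∧ X ω = x) ≠ 0 →
      (cprob p (fun ω => A ω = a) (fun ω => W ω = w ∧ X ω = x))⁻¹ =
        cexp p (fun ω => q (Z ω) a (X ω)) (fun ω => A ω = a ∧ W ω = w ∧ X ω = x))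
    (hcomplete : ∀ (ν : 𝒰 → ℝ) (a : Bool) (x : 𝒳),
      (∀ w, pr p (fun ω => A ω = a ∧ W ω = w ∧ X ω = x) ≠ 0 →
        cexp p (fun ω => ν (U ω)) (fun ω => A ω = a ∧ W ω = w ∧ X ω = x) = 0) →
      ∀ ω, p ω ≠ 0 → A ω = a → X ω = x → ν (U ω) = 0) :
    ∀ (a : Bool) u x, pr p (fun ω => A ω = a ∧ U ω = u ∧ X ω = x) ≠ 0 →
      (cprob p (fun ω => A ω = a) (fun ω => U ω = u ∧ X ω = x))⁻¹ =
        cexp p (fun ω => q (Z ω) a (X ω)) (fun ω => A ω = a ∧ U ω = u ∧ X ω = x) :=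
  stmt_1_general p hp U Z X W A q hCI hpos hbridge hcomplete
end

section
/- Let P be a d_u × d_z matrix with entries P(U = u_i | Z = z_j) for a jointly finitely-supported pair (U, Z) where every z_j has positive probability. Then the completeness condition—E[ν(U) | Z] = 0 a.s. implies ν(U) = 0 a.s. for all ν—holds if and only if the matrix P has rank d_u, where d_u is the number of support points of U. -/
/-! Conditioning on `Z = z` turns `E[ν(U) | Z = z]` into the `z`-th entry of `ν ᵥ* P`, so
completeness says exactly that the rows of `P` indexed by the support of `U` are linearly
independent. The rows outside the support vanish, hence that family spans the row space of `P`,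
and its independence is equivalent to `rank P = |supp U|`. -/

open Finset MeasureTheory

open scoped Classical

open Matrix

theorem Submodule.span_image_eq_span_range_of_eq_zero {ι R M : Type*} [Semiring R]
    [AddCommMonoid M] [Module R M] {f : ι → M} {s : Set ι} (hf : ∀ i ∉ s, f i = 0) :
    Submodule.span R (f '' s) = Submodule.span R (Set.range f) := by
  refine le_antisymm (Submodule.span_mono (Set.image_subset_range f s)) (Submodule.span_le.2 ?_)
  rintro _ ⟨i, rfl⟩
  by_cases hi : i ∈ s
  · exact Submodule.subset_span ⟨i, hi, rfl⟩
  · simp [hf i hi]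

theorem Matrix.rank_eq_card_iff_of_row_eq_zero {m n K : Type*} [Fintype m] [Fintype n] [Field K]
    {A : Matrix m n K} {S : Finset m} (hA : ∀ i ∉ S, A i = 0) :
    A.rank = #S ↔ ∀ ν, ν ᵥ* A = 0 → ∀ i ∈ S, ν i = 0 := by
  have hvecMul : ∀ ν : m → K, ν ᵥ* A = ∑ i ∈ S, ν i • A i := fun ν => by
    rw [vecMul_eq_sum, Finset.sum_subset (Finset.subset_univ S)]
    intro i _ hi
    rw [hA i hi, smul_zero]
  have hrank : A.rank = Set.finrank K (A.row '' S) := by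
    rw [rank_eq_finrank_span_row, Set.finrank,
      Submodule.span_image_eq_span_range_of_eq_zero (f := A.row) hA]
  calc A.rank = #S ↔ LinearIndepOn K A.row S := by
        rw [hrank, LinearIndepOn, linearIndependent_iff_card_eq_finrank_span, Set.image_eq_range]
        simp [eq_comm]
    _ ↔ _ := by simp_rw [linearIndepOn_finset_iff, hvecMul]; rfl

section FiniteProbability

variable {Ω : Type*} [Fintype Ω] {p : Ω → ℝ}

theorem pr_eq_zero_iff (hp : ∀ ω, 0 ≤ p ω) {E : Ω → Prop} :
    pr p E = 0 ↔ ∀ ω, E ω → p ω = 0 := by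
  rw [pr, Finset.sum_eq_zero_iff_of_nonneg fun ω _ => by split_ifs <;> simp only [hp ω, le_refl]]
  refine forall_congr' fun ω => ?_
  by_cases hE : E ω <;> simp [hE]

theorem pr_ne_zero_iff (hp : ∀ ω, 0 ≤ p ω) {E : Ω → Prop} :
    pr p E ≠ 0 ↔ ∃ ω, E ω ∧ p ω ≠ 0 := by
  simp [pr_eq_zero_iff hp]

theorem cprob_eq_zero_of_pr_eq_zero (hp : ∀ ω, 0 ≤ p ω) {E : Ω → Prop} (hE : pr p E = 0)
    (F : Ω → Prop) : cprob p E F = 0 := by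
  rw [cprob, (pr_eq_zero_iff hp).2 fun ω hω => (pr_eq_zero_iff hp).1 hE ω hω.1, zero_div]

theorem cexp_comp_eq_sum_mul_cprob {𝒰 : Type*} [Fintype 𝒰] (ν : 𝒰 → ℝ) (U : Ω → 𝒰)
    (E : Ω → Prop) :
    cexp p (fun ω => ν (U ω)) E = ∑ u, ν u * cprob p (fun ω => U ω = u) E := by
  have hnum : (∑ ω, if E ω then p ω * ν (U ω) else 0) =
      ∑ u, ν u * pr p (fun ω => U ω = u ∧ E ω) := by
    simp_rw [pr, Finset.mul_sum]
    rw [Finset.sum_comm]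
    refine Finset.sum_congr rfl fun ω _ => ?_
    by_cases hE : E ω <;> simp [hE, mul_comm]
  simp_rw [cexp, cprob, hnum, Finset.sum_div, mul_div_assoc]

theorem forall_pr_ne_zero_imp_iff (hp : ∀ ω, 0 ≤ p ω) {𝒰 : Type*} (U : Ω → 𝒰)
    (q : 𝒰 → Prop) :
    (∀ u, pr p (fun ω => U ω = u) ≠ 0 → q u) ↔ ∀ ω, p ω ≠ 0 → q (U ω) := by
  simp only [pr_ne_zero_iff hp]
  exact ⟨fun h ω hω => h _ ⟨ω, rfl, hω⟩, fun h u ⟨ω, hωu, hω⟩ => hωu ▸ h ω hω⟩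

end FiniteProbability

theorem stmt_5_general {Ω 𝒰 𝒵 : Type*} [Fintype Ω] [Fintype 𝒰] [Fintype 𝒵]
    (p : Ω → ℝ) (hp : ∀ ω, 0 ≤ p ω)
    (U : Ω → 𝒰) (Z : Ω → 𝒵)
    (P : Matrix 𝒰 𝒵 ℝ)
    (hP : ∀ u z, P u z = cprob p (fun ω => U ω = u) (fun ω => Z ω = z)) :
    ((∀ ν : 𝒰 → ℝ,
        (∀ z, cexp p (fun ω => ν (U ω)) (fun ω => Z ω = z) = 0) →
        ∀ ω, p ω ≠ 0 → ν (U ω) = 0) ↔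
      P.rank = (univ.filter fun u : 𝒰 => pr p (fun ω => U ω = u) ≠ 0).card) := by
  have hrows : ∀ u ∉ univ.filter fun u : 𝒰 => pr p (fun ω => U ω = u) ≠ 0, P u = 0 :=
    fun u hu => funext fun z => by
      rw [hP, cprob_eq_zero_of_pr_eq_zero hp (by simpa using hu), Pi.zero_apply]
  have hcexp : ∀ ν z, cexp p (fun ω => ν (U ω)) (fun ω => Z ω = z) = (ν ᵥ* P) z := by
    simp [cexp_comp_eq_sum_mul_cprob, hP, Matrix.vecMul, dotProduct]
  rw [Matrix.rank_eq_card_iff_of_row_eq_zero hrows]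
  refine forall_congr' fun ν => ?_
  simp_rw [hcexp, funext_iff, Pi.zero_apply]
  refine imp_congr_right fun _ => ?_
  simp only [mem_filter, mem_univ, true_and]
  exact (forall_pr_ne_zero_imp_iff hp U (fun u => ν u = 0)).symm

/-- matrix characterization of completeness for categorical variables:
with `P u z = P(U = u | Z = z)` (every `z` having positive probability), completeness
of the conditional law of `U` given `Z` holds iff `P` has rank equal to the number of
support points of `U` (full row rank). -/
theorem stmt_5 {Ω 𝒰 𝒵 : Type*} [Fintype Ω] [Fintype 𝒰] [Fintype 𝒵] [DecidableEq 𝒰]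
    (p : Ω → ℝ) (hp : ∀ ω, 0 ≤ p ω) (hsum : ∑ ω, p ω = 1)
    (U : Ω → 𝒰) (Z : Ω → 𝒵)
    (hz : ∀ z : 𝒵, pr p (fun ω => Z ω = z) ≠ 0)
    (P : Matrix 𝒰 𝒵 ℝ)
    (hP : ∀ u z, P u z = cprob p (fun ω => U ω = u) (fun ω => Z ω = z)) :
    ((∀ ν : 𝒰 → ℝ,
        (∀ z, cexp p (fun ω => ν (U ω)) (fun ω => Z ω = z) = 0) →
        ∀ ω, p ω ≠ 0 → ν (U ω) = 0) ↔
      P.rank = (univ.filter fun u : 𝒰 => pr p (fun ω => U ω = u) ≠ 0).card) :=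
  stmt_5_general p hp U Z P hP
end

section
/- If q0 satisfies the latent-level bridge equation 1/f(a(0) | u(0), x(0)) = E[Q0(a(0)) | a(0), u(0), x(0)] and (Z(0), A(0)) ⟂ W(0) | (X(0), U(0)), then for every integrable function n0 of (W(0), A(0), X(0)), E[ Q0(A(0)) n0(W(0), A(0), X(0)) ] = E[ n0(W(0), 1, X(0)) + n0(W(0), 0, X(0)) ]. -/
open Finset MeasureTheory

open scoped Classical

/-! Condition on the stratum `(X0, U0) = (x, u)`. There the integrand splits over the two arms as
`1[A0 = a] q0(Z0, a, x) · n0(W0, a, x)`. The weight is a function of `(Z0, A0)`, hence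
conditionally independent of `W0`, and by the bridge equation its conditional mean is
`P(A0 = a | u, x) · P(A0 = a | u, x)⁻¹ = 1`; so each arm contributes the unweighted conditional
mean of `n0(W0, a, x)`. Averaging over strata gives the claim. -/

section FiniteProbability

variable {Ω : Type*} [Fintype Ω] {p : Ω → ℝ}

lemma cexp_congr_on {f g : Ω → ℝ} {E : Ω → Prop} (h : ∀ ω, E ω → f ω = g ω) :
    cexp p f E = cexp p g E := by
  unfold cexp
  congr 1
  refine sum_congr rfl fun ω _ => ?_
  split_ifs with hω
  · rw [h ω hω]
  · rfl

lemma cexp_add (f g : Ω → ℝ) (E : Ω → Prop) :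
    cexp p (fun ω => f ω + g ω) E = cexp p f E + cexp p g E := by
  unfold cexp
  rw [← add_div, ← sum_add_distrib]
  congr 1
  refine sum_congr rfl fun ω _ => ?_
  split_ifs
  · ring
  · simp

lemma cexp_ite (hp : ∀ ω, 0 ≤ p ω) (A E : Ω → Prop) [DecidablePred A] (f : Ω → ℝ) :
    cexp p (fun ω => if A ω then f ω else 0) E =
      cprob p A E * cexp p f (fun ω => A ω ∧ E ω) := by
  have hnum : (∑ ω, if E ω then p ω * (if A ω then f ω else 0) else 0) =
      cexp p f (fun ω => A ω ∧ E ω) * pr p (fun ω => A ω ∧ E ω) := by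
    rw [cexp_mul_pr hp]
    exact sum_congr rfl fun ω _ => by by_cases hA : A ω <;> by_cases hE : E ω <;> simp [hA, hE]
  rw [cprob, cexp, hnum]
  ring

lemma pexp_eq_sum_cexp_mul_pr (hp : ∀ ω, 0 ≤ p ω) {γ : Type*} (C : Ω → γ) (f : Ω → ℝ) :
    pexp p f = ∑ c ∈ univ.image C, cexp p f (fun ω => C ω = c) * pr p (fun ω => C ω = c) := by
  rw [pexp, ← sum_fiberwise_of_maps_to fun ω _ => mem_image_of_mem C (mem_univ ω)]
  exact sum_congr rfl fun c _ => (sum_filter _ _).trans (cexp_mul_pr hp _ _).symm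

lemma pexp_eq_of_cexp_eq (hp : ∀ ω, 0 ≤ p ω) {γ : Type*} (C : Ω → γ) {f g : Ω → ℝ}
    (h : ∀ c, pr p (fun ω => C ω = c) ≠ 0 →
      cexp p f (fun ω => C ω = c) = cexp p g (fun ω => C ω = c)) :
    pexp p f = pexp p g := by
  rw [pexp_eq_sum_cexp_mul_pr hp C, pexp_eq_sum_cexp_mul_pr hp C]
  refine sum_congr rfl fun c _ => ?_
  by_cases hc : pr p (fun ω => C ω = c) = 0
  · simp [hc]
  · rw [h c hc]

lemma cexp_ite_eq_one_of_inv_cprob (hp : ∀ ω, 0 ≤ p ω) {A E : Ω → Prop} [DecidablePred A]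
    {Q : Ω → ℝ} (hA : 0 < cprob p A E)
    (hQ : pr p (fun ω => A ω ∧ E ω) ≠ 0 → (cprob p A E)⁻¹ = cexp p Q (fun ω => A ω ∧ E ω)) :
    cexp p (fun ω => if A ω then Q ω else 0) E = 1 := by
  have hAE : pr p (fun ω => A ω ∧ E ω) ≠ 0 := fun h => hA.ne' (by rw [cprob, h, zero_div])
  rw [cexp_ite hp, ← hQ hAE, mul_inv_cancel₀ hA.ne']

end FiniteProbability

lemma cexp_bridge_weighted_eq_sum_arms {Ω 𝒰 𝒳 𝒵 𝒲 : Type*} [Fintype Ω] {p : Ω → ℝ}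
    (hp : ∀ ω, 0 ≤ p ω) {A0 : Ω → Bool} {U0 : Ω → 𝒰} {X0 : Ω → 𝒳} {Z0 : Ω → 𝒵} {W0 : Ω → 𝒲}
    {q0 : 𝒵 → Bool → 𝒳 → ℝ}
    (hCI : CondIndep p (fun ω => (Z0 ω, A0 ω)) W0 (fun ω => (X0 ω, U0 ω)))
    (hpos : ∀ (a : Bool) u x, pr p (fun ω => U0 ω = u ∧ X0 ω = x) ≠ 0 →
      0 < cprob p (fun ω => A0 ω = a) (fun ω => U0 ω = u ∧ X0 ω = x))
    (hbridge : ∀ (a : Bool) u x, pr p (fun ω => A0 ω = a ∧ U0 ω = u ∧ X0 ω = x) ≠ 0 →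
      (cprob p (fun ω => A0 ω = a) (fun ω => U0 ω = u ∧ X0 ω = x))⁻¹ =
        cexp p (fun ω => q0 (Z0 ω) a (X0 ω)) (fun ω => A0 ω = a ∧ U0 ω = u ∧ X0 ω = x))
    (n0 : 𝒲 → Bool → 𝒳 → ℝ) (x : 𝒳) (u : 𝒰)
    (hxu : pr p (fun ω => (X0 ω, U0 ω) = (x, u)) ≠ 0) :
    cexp p (fun ω => q0 (Z0 ω) (A0 ω) (X0 ω) * n0 (W0 ω) (A0 ω) (X0 ω))
        (fun ω => (X0 ω, U0 ω) = (x, u)) =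
      cexp p (fun ω => n0 (W0 ω) true (X0 ω) + n0 (W0 ω) false (X0 ω))
        (fun ω => (X0 ω, U0 ω) = (x, u)) := by
  have hX : ∀ ω, (X0 ω, U0 ω) = (x, u) → X0 ω = x := fun ω h => congrArg Prod.fst h
  have hux : pr p (fun ω => U0 ω = u ∧ X0 ω = x) ≠ 0 := by
    simpa only [Prod.mk.injEq, and_comm] using hxu
  have arm : ∀ a : Bool,
      cexp p (fun ω => (if A0 ω = a then q0 (Z0 ω) a x else 0) * n0 (W0 ω) a x)
          (fun ω => (X0 ω, U0 ω) = (x, u)) =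
        cexp p (fun ω => n0 (W0 ω) a (X0 ω)) (fun ω => (X0 ω, U0 ω) = (x, u)) := by
    intro a
    have hweight : cexp p (fun ω => if A0 ω = a then q0 (Z0 ω) a x else 0)
        (fun ω => (X0 ω, U0 ω) = (x, u)) = 1 := by
      simp only [Prod.mk.injEq, and_comm (a := X0 _ = x)]
      exact cexp_ite_eq_one_of_inv_cprob hp (hpos a u x hux) fun hAE =>
        (hbridge a u x hAE).trans (cexp_congr_on fun ω h => by rw [h.2.2])
    rw [hCI (fun s => if s.2 = a then q0 s.1 a x else 0) (fun w => n0 w a x) (x, u) hxu,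
      hweight, one_mul]
    exact cexp_congr_on fun ω h => by rw [hX ω h]
  calc _ = cexp p (fun ω => (if A0 ω = true then q0 (Z0 ω) true x else 0) * n0 (W0 ω) true x +
          (if A0 ω = false then q0 (Z0 ω) false x else 0) * n0 (W0 ω) false x)
          (fun ω => (X0 ω, U0 ω) = (x, u)) :=
        cexp_congr_on fun ω h => by rw [hX ω h]; cases A0 ω <;> simp
    _ = _ := by rw [cexp_add, arm, arm, ← cexp_add]

theorem stmt_15_general {Ω 𝒰 𝒳 𝒵 𝒲 : Type*} [Fintype Ω]
    (p : Ω → ℝ) (hp : ∀ ω, 0 ≤ p ω)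
    (A0 : Ω → Bool) (U0 : Ω → 𝒰) (X0 : Ω → 𝒳) (Z0 : Ω → 𝒵) (W0 : Ω → 𝒲)
    (q0 : 𝒵 → Bool → 𝒳 → ℝ)
    (hCI : CondIndep p (fun ω => (Z0 ω, A0 ω)) W0 (fun ω => (X0 ω, U0 ω)))
    (hpos : ∀ (a : Bool) u x, pr p (fun ω => U0 ω = u ∧ X0 ω = x) ≠ 0 →
      0 < cprob p (fun ω => A0 ω = a) (fun ω => U0 ω = u ∧ X0 ω = x))
    (hbridge : ∀ (a : Bool) u x, pr p (fun ω => A0 ω = a ∧ U0 ω = u ∧ X0 ω = x) ≠ 0 →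
      (cprob p (fun ω => A0 ω = a) (fun ω => U0 ω = u ∧ X0 ω = x))⁻¹ =
        cexp p (fun ω => q0 (Z0 ω) a (X0 ω))
          (fun ω => A0 ω = a ∧ U0 ω = u ∧ X0 ω = x)) :
    ∀ n0 : 𝒲 → Bool → 𝒳 → ℝ,
      pexp p (fun ω => q0 (Z0 ω) (A0 ω) (X0 ω) * n0 (W0 ω) (A0 ω) (X0 ω)) =
        pexp p (fun ω => n0 (W0 ω) true (X0 ω) + n0 (W0 ω) false (X0 ω)) := by
  intro n0
  refine pexp_eq_of_cexp_eq hp (fun ω => (X0 ω, U0 ω)) ?_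
  rintro ⟨x, u⟩ hxu
  exact cexp_bridge_weighted_eq_sum_arms hp hCI hpos hbridge n0 x u hxu

/-- unbiasedness of the first-stage treatment-bridge estimating equation:
if `q0` satisfies its latent-level bridge equation and `(Z(0), A(0)) ⟂ W(0) | (X(0), U(0))`,
then for every `n0`, `E[Q0(A(0)) n0(W(0), A(0), X(0))] = E[n0(W(0), 1, X(0)) + n0(W(0), 0, X(0))]`. -/
theorem stmt_15 {Ω 𝒰 𝒳 𝒵 𝒲 : Type*} [Fintype Ω]
    (p : Ω → ℝ) (hp : ∀ ω, 0 ≤ p ω) (hsum : ∑ ω, p ω = 1)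
    (A0 : Ω → Bool) (U0 : Ω → 𝒰) (X0 : Ω → 𝒳) (Z0 : Ω → 𝒵) (W0 : Ω → 𝒲)
    (q0 : 𝒵 → Bool → 𝒳 → ℝ)
    (hCI : CondIndep p (fun ω => (Z0 ω, A0 ω)) W0 (fun ω => (X0 ω, U0 ω)))
    (hpos : ∀ (a : Bool) u x, pr p (fun ω => U0 ω = u ∧ X0 ω = x) ≠ 0 →
      0 < cprob p (fun ω => A0 ω = a) (fun ω => U0 ω = u ∧ X0 ω = x))
    (hbridge : ∀ (a : Bool) u x, pr p (fun ω => A0 ω = a ∧ U0 ω = u ∧ X0 ω = x) ≠ 0 →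
      (cprob p (fun ω => A0 ω = a) (fun ω => U0 ω = u ∧ X0 ω = x))⁻¹ =
        cexp p (fun ω => q0 (Z0 ω) a (X0 ω))
          (fun ω => A0 ω = a ∧ U0 ω = u ∧ X0 ω = x)) :
    ∀ n0 : 𝒲 → Bool → 𝒳 → ℝ,
      pexp p (fun ω => q0 (Z0 ω) (A0 ω) (X0 ω) * n0 (W0 ω) (A0 ω) (X0 ω)) =
        pexp p (fun ω => n0 (W0 ω) true (X0 ω) + n0 (W0 ω) false (X0 ω)) :=
  stmt_15_general p hp A0 U0 X0 Z0 W0 q0 hCI hpos hbridge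
end
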